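/- Let k be a field, V a 3-dimensional vector space, and v₁, v₂ ∈ V linearly independent, w₁, w₂ ∈ W linearly independent (W also 3-dimensional). Denote U_v = v ∧ V ⊂ Λ²V. Then U_{v₁} ⊗ U_{w₁} ∩ U_{v₂} ⊗ U_{w₂} is the 1-dimensional span of (v₁ ∧ v₂) ⊗ (w₁ ∧ w₂), and consequently U_{v₁} ⊗ U_{w₁} + U_{v₂} ⊗ U_{w₂} is 7-dimensional in Λ²V ⊗ Λ²W. -/

import Mathlib

open TensorProduct ExteriorAlgebra

/-- The subspace `U_v = v ∧ V` of the exterior algebra of `V` (its degree-2 part):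
the range of `w ↦ ι v * ι w`. -/
noncomputable def wedgeSub (k : Type*) [Field k] (V : Type*) [AddCommGroup V] [Module k V]
    (v : V) : Submodule k (ExteriorAlgebra k V) :=
  LinearMap.range ((LinearMap.mulLeft k (ExteriorAlgebra.ι k v)).comp
    (ExteriorAlgebra.ι k (M := V)))

/-- The subspace `U ⊗ U'` of `A ⊗ B` determined by subspaces `U ⊆ A`, `U' ⊆ B`. -/
noncomputable def tensorSub (k : Type*) [Field k]
    (A B : Type*) [AddCommGroup A] [Module k A] [AddCommGroup B] [Module k B]
    (U : Submodule k A) (U' : Submodule k B) : Submodule k (A ⊗[k] B) :=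
  LinearMap.range (TensorProduct.map U.subtype U'.subtype)

/-!
Extend `v₁, v₂` and `w₁, w₂` to bases `b` and `c`. For a basis vector `b i`, the space `U_{b i}`
is spanned by the exterior-algebra basis vectors `b_s` with `s` a 2-subset of indices containing
`i`. Hence `U_{v₁} ⊗ U_{w₁}` and `U_{v₂} ⊗ U_{w₂}` are spanned by the parts
`{b_s ⊗ c_t : 0 ∈ s, t}` and `{b_s ⊗ c_t : 1 ∈ s, t}` of the tensor product basis. Spans of two
parts of a basis meet in the span of their common part, here `b_{01} ⊗ c_{01}` alone, and their
sum has dimension `4 + 4 - 1 = 7`.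
-/

open Submodule Module

namespace Module.Basis

section Semiring

variable {R M I : Type*} [Semiring R] [AddCommMonoid M] [Module R M] (b : Basis I R M)

theorem span_image_inf_span_image (s t : Set I) :
    span R (b '' s) ⊓ span R (b '' t) = span R (b '' (s ∩ t)) := by
  ext m
  simp only [mem_inf, b.mem_span_image, Set.subset_inter_iff]

theorem finrank_span_image [Nontrivial R] [StrongRankCondition R] {s : Set I} (hs : s.Finite) :
    finrank R (span R (b '' s)) = s.ncard := by
  have := hs.fintype
  rw [Set.image_eq_range, Set.ncard_eq_toFinset_card', Set.toFinset_card]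
  exact finrank_span_eq_card (b.linearIndependent.comp _ Subtype.val_injective)

end Semiring

variable {R M I : Type*} [CommRing R] [AddCommGroup M] [Module R M] (b : Basis I R M)

theorem exteriorAlgebra_pair [LinearOrder I] {i j : I} (h : i < j) :
    b.ExteriorAlgebra {i, j} = ι R (b i) * ι R (b j) := by
  have hcard : ({i, j} : Finset I).card = 2 := Finset.card_pair h.ne
  have hsort : ({i, j} : Finset I).orderEmbOfFin hcard = ![i, j] :=
    (Finset.orderEmbOfFin_unique hcard (by simp [Fin.forall_fin_two])
      (Fin.strictMono_iff_lt_succ.mpr (by simpa [Fin.forall_fin_one] using h))).symm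
  rw [ExteriorAlgebra.basis_apply_ofCard b hcard]
  simp only [ιMulti_family, Set.powersetCard.ofFinEmbEquiv_symm_apply,
    Set.powersetCard.val_ofCard, hsort, ιMulti_apply, List.ofFn_succ, List.ofFn_zero,
    List.prod_cons, List.prod_nil, mul_one, Function.comp_apply, Matrix.cons_val_zero,
    Matrix.cons_val_succ]

theorem span_ι_mul_ι [LinearOrder I] {i j : I} (h : i ≠ j) :
    span R {ι R (b i) * ι R (b j)} = span R {b.ExteriorAlgebra {i, j}} := by
  rcases h.lt_or_gt with h | h
  · rw [b.exteriorAlgebra_pair h]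
  · have hswap : ι R (b j) * ι R (b i) = -(ι R (b i) * ι R (b j)) :=
      eq_neg_of_add_eq_zero_left (ι_add_mul_swap _ _)
    rw [Finset.pair_comm, b.exteriorAlgebra_pair h, hswap, ← Set.neg_singleton, Submodule.span_neg]

end Module.Basis

theorem exists_basis_castSucc_eq {K V : Type*} [Field K] [AddCommGroup V] [Module K V]
    {n : ℕ} (hV : finrank K V = n + 1) {v : Fin n → V}
    (hv : LinearIndependent K v) : ∃ b : Basis (Fin (n + 1)) K V, ∀ i, b i.castSucc = v i := by
  obtain ⟨x, hx⟩ := exists_linearIndependent_snoc_of_lt_finrank hv (by omega)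
  exact ⟨basisOfLinearIndependentOfCardEqFinrank hx (by simp [hV]), fun i => by simp⟩

section

variable {k : Type*} [Field k]

theorem wedgeSub_basis_eq_span {V I : Type*} [AddCommGroup V] [Module k V] [LinearOrder I]
    (b : Basis I k V) (i : I) :
    wedgeSub k V (b i) = span k (b.ExteriorAlgebra '' {s | s.card = 2 ∧ i ∈ s}) := by
  rw [wedgeSub, LinearMap.range_eq_map, ← b.span_eq, map_span, ← Set.range_comp]
  apply le_antisymm
  · rw [span_le]
    rintro _ ⟨j, rfl⟩
    rcases eq_or_ne i j with rfl | hij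
    · simp
    · have hmem := b.span_ι_mul_ι hij ▸ mem_span_singleton_self (ι k (b i) * ι k (b j))
      refine span_mono ?_ hmem
      exact Set.singleton_subset_iff.mpr ⟨{i, j}, by simp [Finset.card_pair hij], rfl⟩
  · rw [span_le]
    rintro _ ⟨s, ⟨hcard, his⟩, rfl⟩
    obtain ⟨j, hj⟩ := Finset.card_eq_one.mp
      (by rw [Finset.card_erase_of_mem his, hcard] : (s.erase i).card = 1)
    have hij : i ≠ j := (Finset.ne_of_mem_erase (hj ▸ Finset.mem_singleton_self j)).symm
    rw [← Finset.insert_erase his, hj, SetLike.mem_coe, ← span_singleton_le_iff_mem,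
      ← b.span_ι_mul_ι hij, span_singleton_le_iff_mem]
    exact subset_span ⟨j, rfl⟩

variable {A B : Type*} [AddCommGroup A] [Module k A] [AddCommGroup B] [Module k B]

theorem tensorSub_span_span (s : Set A) (t : Set B) :
    tensorSub k A B (span k s) (span k t) = span k (Set.image2 (· ⊗ₜ[k] ·) s t) := by
  have hmap₂ := map₂_span_span k (TensorProduct.mk k A B) s t
  simp only [mk_apply] at hmap₂
  rw [← hmap₂, map₂_eq_span_image2, tensorSub, range_map_eq_span_tmul]
  congr 1
  ext
  simp [Set.image2, eq_comm]

theorem tensorSub_span_image {ι κ : Type*} (b : Basis ι k A) (c : Basis κ k B)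
    (s : Set ι) (t : Set κ) :
    tensorSub k A B (span k (b '' s)) (span k (c '' t)) =
      span k (b.tensorProduct c '' s ×ˢ t) := by
  rw [tensorSub_span_span, Set.image2_image_left, Set.image2_image_right, ← Set.image_prod]
  simp [Basis.tensorProduct_apply']

end

theorem stmt3_general (k : Type*) [Field k]
    (V W : Type*) [AddCommGroup V] [Module k V] [AddCommGroup W] [Module k W]
    (hV : Module.finrank k V = 3) (hW : Module.finrank k W = 3)
    (v₁ v₂ : V) (w₁ w₂ : W)
    (hv : LinearIndependent k ![v₁, v₂]) (hw : LinearIndependent k ![w₁, w₂]) :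
    (tensorSub k _ _ (wedgeSub k V v₁) (wedgeSub k W w₁) ⊓
        tensorSub k _ _ (wedgeSub k V v₂) (wedgeSub k W w₂)
      = Submodule.span k
          {(ExteriorAlgebra.ι k v₁ * ExteriorAlgebra.ι k v₂) ⊗ₜ[k]
            (ExteriorAlgebra.ι k w₁ * ExteriorAlgebra.ι k w₂)}) ∧
    Module.finrank k (Submodule.span k
        {(ExteriorAlgebra.ι k v₁ * ExteriorAlgebra.ι k v₂) ⊗ₜ[k]
          (ExteriorAlgebra.ι k w₁ * ExteriorAlgebra.ι k w₂)} :
        Submodule k (ExteriorAlgebra k V ⊗[k] ExteriorAlgebra k W)) = 1 ∧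
    Module.finrank k
      ↥(tensorSub k _ _ (wedgeSub k V v₁) (wedgeSub k W w₁) ⊔
          tensorSub k _ _ (wedgeSub k V v₂) (wedgeSub k W w₂)) = 7 := by
  obtain ⟨b, hb⟩ := exists_basis_castSucc_eq hV hv
  obtain ⟨c, hc⟩ := exists_basis_castSucc_eq hW hw
  obtain ⟨hb₀, hb₁, hc₀, hc₁⟩ : b 0 = v₁ ∧ b 1 = v₂ ∧ c 0 = w₁ ∧ c 1 = w₂ :=
    ⟨hb 0, hb 1, hc 0, hc 1⟩
  let 𝔅 := b.ExteriorAlgebra.tensorProduct c.ExteriorAlgebra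
  let S : Fin 3 → Set (Finset (Fin 3)) := fun i => {s | s.card = 2 ∧ i ∈ s}
  have hU₁ : tensorSub k _ _ (wedgeSub k V v₁) (wedgeSub k W w₁) =
      span k (𝔅 '' S 0 ×ˢ S 0) := by
    rw [← hb₀, ← hc₀, wedgeSub_basis_eq_span, wedgeSub_basis_eq_span, tensorSub_span_image]
  have hU₂ : tensorSub k _ _ (wedgeSub k V v₂) (wedgeSub k W w₂) =
      span k (𝔅 '' S 1 ×ˢ S 1) := by
    rw [← hb₁, ← hc₁, wedgeSub_basis_eq_span, wedgeSub_basis_eq_span, tensorSub_span_image]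
  have h𝔅 : (ι k v₁ * ι k v₂) ⊗ₜ[k] (ι k w₁ * ι k w₂) = 𝔅 ({0, 1}, {0, 1}) := by
    rw [Basis.tensorProduct_apply, b.exteriorAlgebra_pair Fin.zero_lt_one,
      c.exteriorAlgebra_pair Fin.zero_lt_one, hb₀, hb₁, hc₀, hc₁]
  have hS : S 0 ∩ S 1 = {{0, 1}} := by
    ext s
    simp only [S, Set.mem_inter_iff, Set.mem_ofPred_eq, Set.mem_singleton_iff]
    revert s
    decide
  have hinter : S 0 ×ˢ S 0 ∩ S 1 ×ˢ S 1 = {({0, 1}, {0, 1})} := by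
    rw [Set.prod_inter_prod, hS, Set.singleton_prod_singleton]
  have hunion : (S 0 ×ˢ S 0 ∪ S 1 ×ˢ S 1).ncard = 7 := by
    rw [Set.ncard_eq_toFinset_card']
    decide
  refine ⟨?_, ?_, ?_⟩
  · rw [hU₁, hU₂, Basis.span_image_inf_span_image, hinter, Set.image_singleton, h𝔅]
  · rw [h𝔅, finrank_span_singleton (𝔅.ne_zero _)]
  · rw [hU₁, hU₂, ← span_union, ← Set.image_union, Basis.finrank_span_image _ (Set.toFinite _),
      hunion]

/-- Let `k` be a field, `V`, `W` 3-dimensional vector spaces, `v₁, v₂ ∈ V`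
linearly independent and `w₁, w₂ ∈ W` linearly independent.  With `U_v = v ∧ V ⊆ Λ²V`,
the intersection `U_{v₁} ⊗ U_{w₁} ∩ U_{v₂} ⊗ U_{w₂}` is the 1-dimensional span of
`(v₁ ∧ v₂) ⊗ (w₁ ∧ w₂)`, and consequently `U_{v₁} ⊗ U_{w₁} + U_{v₂} ⊗ U_{w₂}` is
7-dimensional in `Λ²V ⊗ Λ²W` (formalized inside the exterior algebras). -/
theorem stmt3 (k : Type*) [Field k]
    (V W : Type*) [AddCommGroup V] [Module k V] [AddCommGroup W] [Module k W]
    [FiniteDimensional k V] [FiniteDimensional k W]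
    (hV : Module.finrank k V = 3) (hW : Module.finrank k W = 3)
    (v₁ v₂ : V) (w₁ w₂ : W)
    (hv : LinearIndependent k ![v₁, v₂]) (hw : LinearIndependent k ![w₁, w₂]) :
    (tensorSub k _ _ (wedgeSub k V v₁) (wedgeSub k W w₁) ⊓
        tensorSub k _ _ (wedgeSub k V v₂) (wedgeSub k W w₂)
      = Submodule.span k
          {(ExteriorAlgebra.ι k v₁ * ExteriorAlgebra.ι k v₂) ⊗ₜ[k]
            (ExteriorAlgebra.ι k w₁ * ExteriorAlgebra.ι k w₂)}) ∧
    Module.finrank k (Submodule.span k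
        {(ExteriorAlgebra.ι k v₁ * ExteriorAlgebra.ι k v₂) ⊗ₜ[k]
          (ExteriorAlgebra.ι k w₁ * ExteriorAlgebra.ι k w₂)} :
        Submodule k (ExteriorAlgebra k V ⊗[k] ExteriorAlgebra k W)) = 1 ∧
    Module.finrank k
      ↥(tensorSub k _ _ (wedgeSub k V v₁) (wedgeSub k W w₁) ⊔
          tensorSub k _ _ (wedgeSub k V v₂) (wedgeSub k W w₂)) = 7 :=
  stmt3_general k V W hV hW v₁ v₂ w₁ w₂ hv hw
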